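/- arXiv:1702.07267 — 7 statements merged into one kernel-verified Lean document; each statement's English description precedes it below -/
import Mathlib

section
/- Let X be a finite set and let Γ be a second order conservative constraint language on X (a set of unary and binary functions X → {0,1} and X × X → {0,1} that contains every unary function X → {0,1}). If p : X × X × X → X is a Maltsev polymorphism of Γ (i.e. p(x,x,y) = p(y,x,x) = y for all x, y ∈ X, and p preserves every function in Γ), then the derivative operator p' of p, defined by p'(x,y,z) = z if p(x,y,z) = x and p'(x,y,z) = x otherwise, is a majority polymorphism of Γ (i.e. p'(x,x,y) = p'(x,y,x) = p'(y,x,x) = x for all x, y ∈ X, and p' preserves every function in Γ). -/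
/-- `p` is a polymorphism of a unary function `f : X → {0,1}`. -/
def IsUnaryPolymorphism {X : Type*} (p : X → X → X → X) (f : X → Fin 2) : Prop :=
  ∀ x y z : X, f x = 1 → f y = 1 → f z = 1 → f (p x y z) = 1

/-- `p` is a polymorphism of a binary function `f : X × X → {0,1}`. -/
def IsBinaryPolymorphism {X : Type*} (p : X → X → X → X) (f : X × X → Fin 2) : Prop :=
  ∀ x₁ x₂ y₁ y₂ z₁ z₂ : X, f (x₁, x₂) = 1 → f (y₁, y₂) = 1 → f (z₁, z₂) = 1 →
    f (p x₁ y₁ z₁, p x₂ y₂ z₂) = 1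

/-- `p` is a conservative operator. -/
def IsConservativeOp {X : Type*} (p : X → X → X → X) : Prop :=
  ∀ x y z : X, p x y z ∈ ({x, y, z} : Set X)

/-- `p` is a Maltsev operator. -/
def IsMaltsevOp {X : Type*} (p : X → X → X → X) : Prop :=
  ∀ x y : X, p x x y = y ∧ p y x x = y

/-- `p` is a majority operator. -/
def IsMajorityOp {X : Type*} (p : X → X → X → X) : Prop :=
  ∀ x y : X, p x x y = x ∧ p x y x = x ∧ p y x x = x

/-- The derivative operator `p'` of `p`: `p' x y z = z` if `p x y z = x`, else `x`. -/
def derivOp {X : Type*} [DecidableEq X] (p : X → X → X → X) : X → X → X → X :=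
  fun x y z => if p x y z = x then z else x

/-- Rectangularity: a binary relation preserved by a Maltsev operation is rectangular. -/
lemma rect_of_maltsev {X : Type*} {p : X → X → X → X} (hmal : IsMaltsevOp p)
    {f : X × X → Fin 2} (hf : IsBinaryPolymorphism p f)
    {a b c d : X} (h1 : f (a, b) = 1) (h2 : f (a, d) = 1) (h3 : f (c, d) = 1) :
    f (c, b) = 1 := by
  have := hf c d a d a b h3 h2 h1
  rwa [(hmal a c).2, (hmal d b).1] at this

/-- Key lemma for the mixed case. -/
lemma key_mixed {X : Type*} {p : X → X → X → X} (hmal : IsMaltsevOp p)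
    (hc : ∀ x y z : X, p x y z = x ∨ p x y z = y ∨ p x y z = z)
    {f : X × X → Fin 2} (hf : IsBinaryPolymorphism p f)
    {x₁ x₂ y₁ y₂ z₁ z₂ : X}
    (hx : f (x₁, x₂) = 1) (hy : f (y₁, y₂) = 1) (hz : f (z₁, z₂) = 1)
    (h1 : p x₁ y₁ z₁ = x₁) (h2 : p x₂ y₂ z₂ ≠ x₂) :
    f (z₁, x₂) = 1 := by
  have hd : f (x₁, p x₂ y₂ z₂) = 1 := by
    have := hf x₁ x₂ y₁ y₂ z₁ z₂ hx hy hz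
    rwa [h1] at this
  rcases hc x₂ y₂ z₂ with h | h | h
  · exact absurd h h2
  · -- p x₂ y₂ z₂ = y₂
    rw [h] at hd
    -- f (y₁, x₂) = 1 by rectangularity
    have hyx : f (y₁, x₂) = 1 := rect_of_maltsev hmal hf hx hd hy
    -- f (x₁, z₂) = 1 : apply p to rows (x₁,x₂),(y₁,x₂),(z₁,z₂)
    have hxz : f (x₁, z₂) = 1 := by
      have := hf x₁ x₂ y₁ x₂ z₁ z₂ hx hyx hz
      rwa [h1, (hmal x₂ z₂).1] at this
    exact rect_of_maltsev hmal hf hx hxz hz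
  · -- p x₂ y₂ z₂ = z₂
    rw [h] at hd
    exact rect_of_maltsev hmal hf hx hd hz

theorem maltsev_implies_majority_for_second_order_conservative
    {X : Type*} [Fintype X] [DecidableEq X]
    (Γ₁ : Set (X → Fin 2)) (Γ₂ : Set (X × X → Fin 2))
    (hcons : ∀ f : X → Fin 2, f ∈ Γ₁)
    (p : X → X → X → X)
    (hmal : IsMaltsevOp p)
    (hpoly₁ : ∀ f ∈ Γ₁, IsUnaryPolymorphism p f)
    (hpoly₂ : ∀ f ∈ Γ₂, IsBinaryPolymorphism p f) :
    IsMajorityOp (derivOp p) ∧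
      (∀ f ∈ Γ₁, IsUnaryPolymorphism (derivOp p) f) ∧
      (∀ f ∈ Γ₂, IsBinaryPolymorphism (derivOp p) f) := by
  -- conservativity of p
  have hc : ∀ x y z : X, p x y z = x ∨ p x y z = y ∨ p x y z = z := by
    intro x y z
    set f : X → Fin 2 := fun u => if u = x ∨ u = y ∨ u = z then 1 else 0 with hfdef
    have h := hpoly₁ f (hcons f) x y z (by simp [hfdef]) (by simp [hfdef]) (by simp [hfdef])
    by_contra hcontra
    push_neg at hcontra
    simp only [hfdef] at h
    rw [if_neg (by tauto)] at h
    exact absurd h (by decide)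
  refine ⟨?_, ?_, ?_⟩
  · intro x y
    refine ⟨?_, ?_, ?_⟩
    · simp only [derivOp, (hmal x y).1]
      split <;> simp_all
    · simp only [derivOp]
      rcases hc x y x with h | h | h <;> simp [h]
    · simp only [derivOp, (hmal x y).2]
      split <;> simp_all
  · intro f hf x y z hx hy hz
    simp only [derivOp]
    split <;> assumption
  · intro f hf x₁ x₂ y₁ y₂ z₁ z₂ hx hy hz
    have hfp := hpoly₂ f hf
    simp only [derivOp]
    split <;> rename_i h1 <;> split <;> rename_i h2
    · exact hz
    · exact key_mixed hmal hc hfp hx hy hz h1 h2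
    · -- first coord = x₁ (p ≠ x₁), second = z₂ (p = x₂): need f (x₁, z₂) = 1
      -- use key_mixed on the flipped relation
      set g : X × X → Fin 2 := fun u => f (u.2, u.1) with hg
      have hgp : IsBinaryPolymorphism p g := by
        intro a₁ a₂ b₁ b₂ c₁ c₂ ha hb hc'
        exact hfp a₂ a₁ b₂ b₁ c₂ c₁ ha hb hc'
      have := key_mixed hmal hc hgp (f := g)
        (x₁ := x₂) (x₂ := x₁) (y₁ := y₂) (y₂ := y₁) (z₁ := z₂) (z₂ := z₁)
        hx hy hz h2 h1
      exact this
    · exact hx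
end

section
/- Let X be a finite set, let f : X × X → {0,1} be a binary function, and let p : X × X × X → X be a conservative Maltsev polymorphism of f (p(x,y,z) ∈ {x,y,z} for all x,y,z; p(x,x,y) = p(y,x,x) = y for all x,y; and whenever f(x₁,x₂) = f(y₁,y₂) = f(z₁,z₂) = 1 then f(p(x₁,y₁,z₁), p(x₂,y₂,z₂)) = 1). Then the derivative operator p' of p, defined by p'(x,y,z) = z if p(x,y,z) = x and p'(x,y,z) = x otherwise, is also a polymorphism of f: whenever f(x₁,x₂) = f(y₁,y₂) = f(z₁,z₂) = 1 then f(p'(x₁,y₁,z₁), p'(x₂,y₂,z₂)) = 1. -/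
theorem derivative_of_conservative_maltsev_poly_is_poly
    {X : Type*} [Fintype X] [DecidableEq X]
    (f : X × X → Fin 2) (p : X → X → X → X)
    (hcons : IsConservativeOp p) (hmal : IsMaltsevOp p)
    (hpoly : IsBinaryPolymorphism p f) :
    IsBinaryPolymorphism (derivOp p) f := by
  intro x₁ x₂ y₁ y₂ z₁ z₂ hx hy hz
  unfold derivOp
  split_ifs with h1 h2 h2
  · exact hz
  · -- goal: f (z₁, x₂) = 1
    have hab : f (x₁, p x₂ y₂ z₂) = 1 := by
      have := hpoly x₁ x₂ y₁ y₂ z₁ z₂ hx hy hz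
      rwa [h1] at this
    rcases hcons x₂ y₂ z₂ with hb | hb | hb
    · exact absurd hb h2
    · rw [hb] at hab
      have h3 : f (z₁, y₂) = 1 := by
        have := hpoly x₁ x₂ x₁ y₂ z₁ z₂ hx hab hz
        rwa [(hmal x₁ z₁).1, hb] at this
      have := hpoly z₁ y₂ x₁ y₂ x₁ x₂ h3 hab hx
      rwa [(hmal x₁ z₁).2, (hmal y₂ x₂).1] at this
    · rw [hb] at hab
      have := hpoly z₁ z₂ x₁ z₂ x₁ x₂ hz hab hx
      rwa [(hmal x₁ z₁).2, (hmal z₂ x₂).1] at this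
  · -- goal: f (x₁, z₂) = 1
    have hab : f (p x₁ y₁ z₁, x₂) = 1 := by
      have := hpoly x₁ x₂ y₁ y₂ z₁ z₂ hx hy hz
      rwa [h2] at this
    rcases hcons x₁ y₁ z₁ with ha | ha | ha
    · exact absurd ha h1
    · rw [ha] at hab
      have h3 : f (y₁, z₂) = 1 := by
        have := hpoly x₁ x₂ y₁ x₂ z₁ z₂ hx hab hz
        rwa [(hmal x₂ z₂).1, ha] at this
      have := hpoly y₁ z₂ y₁ x₂ x₁ x₂ h3 hab hx
      rwa [(hmal y₁ x₁).1, (hmal x₂ z₂).2] at this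
    · rw [ha] at hab
      have := hpoly x₁ x₂ z₁ x₂ z₁ z₂ hx hab hz
      rwa [(hmal z₁ x₁).2, (hmal x₂ z₂).1] at this
  · exact hx
end

section
/- Let X be a finite set, let f : X × X → {0,1} be a binary function, and let p : X × X × X → X be a Maltsev polymorphism of f. Let x₁,x₂,y₁,y₂,z₁,z₂ ∈ X satisfy f(x₁,x₂) = f(y₁,y₂) = f(z₁,z₂) = 1. If p(x₁,y₁,z₁) = x₁ and p(x₂,y₂,z₂) = y₂, then f(z₁,x₂) = 1. -/
theorem case_x1y2
    {X : Type*} [Fintype X] [DecidableEq X]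
    (f : X × X → Fin 2) (p : X → X → X → X)
    (hmal : IsMaltsevOp p) (hpoly : IsBinaryPolymorphism p f)
    (x₁ x₂ y₁ y₂ z₁ z₂ : X)
    (hx : f (x₁, x₂) = 1) (hy : f (y₁, y₂) = 1) (hz : f (z₁, z₂) = 1)
    (h1 : p x₁ y₁ z₁ = x₁) (h2 : p x₂ y₂ z₂ = y₂) :
    f (z₁, x₂) = 1 := by
  have hxy2 : f (x₁, y₂) = 1 := by
    have := hpoly x₁ x₂ y₁ y₂ z₁ z₂ hx hy hz
    rwa [h1, h2] at this
  have hxz2 : f (x₁, z₂) = 1 := by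
    have := hpoly x₁ y₂ y₁ y₂ z₁ z₂ hxy2 hy hz
    rwa [h1, (hmal y₂ z₂).1] at this
  have := hpoly z₁ z₂ x₁ z₂ x₁ x₂ hz hxz2 hx
  rwa [(hmal x₁ z₁).2, (hmal z₂ x₂).1] at this
end

section
/- Let X be a finite set, let f : X × X → {0,1} be a binary function, and let p : X × X × X → X be a Maltsev polymorphism of f. Let x₁,x₂,y₁,y₂,z₁,z₂ ∈ X satisfy f(x₁,x₂) = f(y₁,y₂) = f(z₁,z₂) = 1. If p(x₁,y₁,z₁) = x₁ and p(x₂,y₂,z₂) = z₂, then f(z₁,x₂) = 1. -/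
theorem case_x1z2
    {X : Type*} [Fintype X] [DecidableEq X]
    (f : X × X → Fin 2) (p : X → X → X → X)
    (hmal : IsMaltsevOp p) (hpoly : IsBinaryPolymorphism p f)
    (x₁ x₂ y₁ y₂ z₁ z₂ : X)
    (hx : f (x₁, x₂) = 1) (hy : f (y₁, y₂) = 1) (hz : f (z₁, z₂) = 1)
    (h1 : p x₁ y₁ z₁ = x₁) (h2 : p x₂ y₂ z₂ = z₂) :
    f (z₁, x₂) = 1 := by
  have hxz : f (x₁, z₂) = 1 := by
    have := hpoly x₁ x₂ y₁ y₂ z₁ z₂ hx hy hz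
    rwa [h1, h2] at this
  have := hpoly z₁ z₂ x₁ z₂ x₁ x₂ hz hxz hx
  rwa [(hmal x₁ z₁).2, (hmal z₂ x₂).1] at this
end

section
/- Let X be a finite set, let f : X × X → {0,1} be a binary function, and let p : X × X × X → X be a Maltsev polymorphism of f. Let x₁,x₂,y₁,y₂,z₁,z₂ ∈ X satisfy f(x₁,x₂) = f(y₁,y₂) = f(z₁,z₂) = 1. If p(x₁,y₁,z₁) = y₁ and p(x₂,y₂,z₂) = x₂, then f(x₁,z₂) = 1. -/
theorem case_y1x2
    {X : Type*} [Fintype X] [DecidableEq X]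
    (f : X × X → Fin 2) (p : X → X → X → X)
    (hmal : IsMaltsevOp p) (hpoly : IsBinaryPolymorphism p f)
    (x₁ x₂ y₁ y₂ z₁ z₂ : X)
    (hx : f (x₁, x₂) = 1) (hy : f (y₁, y₂) = 1) (hz : f (z₁, z₂) = 1)
    (h1 : p x₁ y₁ z₁ = y₁) (h2 : p x₂ y₂ z₂ = x₂) :
    f (x₁, z₂) = 1 := by
  have hA : f (y₁, x₂) = 1 := by
    have := hpoly x₁ x₂ y₁ y₂ z₁ z₂ hx hy hz
    rwa [h1, h2] at this
  have hB : f (x₁, y₂) = 1 := by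
    have := hpoly x₁ x₂ y₁ x₂ y₁ y₂ hx hA hy
    rwa [(hmal y₁ x₁).2, (hmal x₂ y₂).1] at this
  have hC : f (y₁, z₂) = 1 := by
    have := hpoly x₁ x₂ y₁ x₂ z₁ z₂ hx hA hz
    rwa [h1, (hmal x₂ z₂).1] at this
  have := hpoly x₁ y₂ y₁ y₂ y₁ z₂ hB hy hC
  rwa [(hmal y₁ x₁).2, (hmal y₂ z₂).1] at this
end

section
/- Let X be a finite set, let f : X × X → {0,1} be a binary function, and let p : X × X × X → X be a Maltsev polymorphism of f. Let x₁,x₂,y₁,y₂,z₁,z₂ ∈ X satisfy f(x₁,x₂) = f(y₁,y₂) = f(z₁,z₂) = 1. If p(x₁,y₁,z₁) = z₁ and p(x₂,y₂,z₂) = x₂, then f(x₁,z₂) = 1. -/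
theorem case_z1x2
    {X : Type*} [Fintype X] [DecidableEq X]
    (f : X × X → Fin 2) (p : X → X → X → X)
    (hmal : IsMaltsevOp p) (hpoly : IsBinaryPolymorphism p f)
    (x₁ x₂ y₁ y₂ z₁ z₂ : X)
    (hx : f (x₁, x₂) = 1) (hy : f (y₁, y₂) = 1) (hz : f (z₁, z₂) = 1)
    (h1 : p x₁ y₁ z₁ = z₁) (h2 : p x₂ y₂ z₂ = x₂) :
    f (x₁, z₂) = 1 := by
  have h3 := hpoly x₁ x₂ y₁ y₂ z₁ z₂ hx hy hz
  rw [h1, h2] at h3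
  have h4 := hpoly x₁ x₂ z₁ x₂ z₁ z₂ hx h3 hz
  rwa [(hmal z₁ x₁).2, (hmal x₂ z₂).1] at h4
end

section
/- Let X be a finite set and let p : X × X × X → X be a conservative Maltsev operator (p(x,y,z) ∈ {x,y,z} and p(x,x,y) = p(y,x,x) = y for all x, y, z ∈ X). Then for every binary function f : X × X → {0,1} of which p is a polymorphism, the derivative operator p' of p (p'(x,y,z) = z if p(x,y,z) = x, else p'(x,y,z) = x) is a conservative majority polymorphism of f: p' is conservative, satisfies p'(x,x,y) = p'(x,y,x) = p'(y,x,x) = x for all x, y ∈ X, and whenever f(x₁,x₂) = f(y₁,y₂) = f(z₁,z₂) = 1 then f(p'(x₁,y₁,z₁), p'(x₂,y₂,z₂)) = 1. -/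
theorem derivative_is_conservative_majority_polymorphism
    {X : Type*} [Fintype X] [DecidableEq X]
    (p : X → X → X → X)
    (hcons : IsConservativeOp p) (hmal : IsMaltsevOp p) :
    ∀ f : X × X → Fin 2, IsBinaryPolymorphism p f →
      IsConservativeOp (derivOp p) ∧ IsMajorityOp (derivOp p) ∧
        IsBinaryPolymorphism (derivOp p) f := by
  intro f hf
  refine ⟨?_, ?_, ?_⟩
  · intro x y z
    simp only [derivOp]
    split <;> simp
  · intro x y
    refine ⟨?_, ?_, ?_⟩
    · simp only [derivOp, (hmal x y).1]
      split_ifs with h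
      · exact h
      · rfl
    · simp only [derivOp]; split <;> rfl
    · simp [derivOp, (hmal x y).2]
  · intro x₁ x₂ y₁ y₂ z₁ z₂ hx hy hz
    have key := hf x₁ x₂ y₁ y₂ z₁ z₂ hx hy hz
    simp only [derivOp]
    by_cases h1 : p x₁ y₁ z₁ = x₁ <;> by_cases h2 : p x₂ y₂ z₂ = x₂
    · rw [if_pos h1, if_pos h2]; exact hz
    · rw [if_pos h1, if_neg h2]
      -- goal : f (z₁, x₂) = 1
      rw [h1] at key
      -- b ∈ {y₂, z₂}
      have hb : p x₂ y₂ z₂ = y₂ ∨ p x₂ y₂ z₂ = z₂ := by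
        rcases hcons x₂ y₂ z₂ with h | h | h
        · exact absurd h h2
        · exact Or.inl h
        · exact Or.inr h
      have hxz : f (x₁, z₂) = 1 := by
        rcases hb with h | h
        · rw [h] at key
          have := hf x₁ y₂ y₁ y₂ z₁ z₂ key hy hz
          rwa [h1, (hmal y₂ z₂).1] at this
        · rwa [h] at key
      have := hf z₁ z₂ x₁ z₂ x₁ x₂ hz hxz hx
      rwa [(hmal x₁ z₁).2, (hmal z₂ x₂).1] at this
    · rw [if_neg h1, if_pos h2]
      -- goal : f (x₁, z₂) = 1
      rw [h2] at key
      have ha : p x₁ y₁ z₁ = y₁ ∨ p x₁ y₁ z₁ = z₁ := by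
        rcases hcons x₁ y₁ z₁ with h | h | h
        · exact absurd h h1
        · exact Or.inl h
        · exact Or.inr h
      rcases ha with h | h
      · rw [h] at key
        -- key : f (y₁, x₂) = 1
        have s1 := hf x₁ x₂ y₁ x₂ y₁ y₂ hx key hy
        rw [(hmal y₁ x₁).2, (hmal x₂ y₂).1] at s1
        -- s1 : f (x₁, y₂) = 1
        have s2 := hf x₁ y₂ y₁ y₂ z₁ z₂ s1 hy hz
        rw [h, (hmal y₂ z₂).1] at s2
        -- s2 : f (y₁, z₂) = 1
        have s3 := hf x₁ x₂ y₁ x₂ y₁ z₂ hx key s2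
        rwa [(hmal y₁ x₁).2, (hmal x₂ z₂).1] at s3
      · rw [h] at key
        -- key : f (z₁, x₂) = 1
        have := hf x₁ x₂ z₁ x₂ z₁ z₂ hx key hz
        rwa [(hmal z₁ x₁).2, (hmal x₂ z₂).1] at this
    · rw [if_neg h1, if_neg h2]; exact hx
end
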